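/- Let μ_n, for n ∈ ℕ, be random probability measures on ℝ^d × ℝ^{d'}. Denote by μ_n^1 the pushforward of μ_n under the first-coordinate projection and by μ_n^2 the pushforward under the second-coordinate projection. Assume that μ_n^1 converges weakly in probability to a random probability measure μ_∞^1 on ℝ^d, and that μ_n^2 converges weakly in probability to the (deterministic) Dirac measure δ_x for some x ∈ ℝ^{d'}. Then μ_n converges weakly in probability to the product measure μ_∞^1 ⊗ δ_x. -/

import Mathlib

/-!
Fix an open set `G ⊆ X × Y` and a decreasing neighbourhood basis `V n` of `y`. The open sets
`S n = interior {a | {a} ×ˢ V n ⊆ G}` increase to a set containing the section `{a | (a, y) ∈ G}`,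
and `S n ×ˢ V n ⊆ G` gives `μᵢ¹(S n) ≤ μᵢ(G) + μᵢ²((V n)ᶜ)`. By the portmanteau theorem the
liminf of the left side is at least `ν(S n)`, while the last term tends to `δ_y((V n)ᶜ) = 0`.
Letting `n → ∞` yields `(ν ⊗ δ_y)(G) = ν{a | (a, y) ∈ G} ≤ liminf μᵢ(G)`, which is the portmanteau
criterion for `μᵢ → ν ⊗ δ_y`. For random measures, apply this along a subsequence on which both
marginals converge almost surely, obtained by extracting twice.
-/

open MeasureTheory Filter Topology

/-- A sequence `μ` of random probability measures on `E` converges weakly in probability to a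
random probability measure `ν` if for every subsequence there is a further subsequence along
which, almost surely, the measures converge weakly (i.e. in the topology of weak convergence
on `ProbabilityMeasure E`). -/
def TendstoWeaklyInProbability {Ω : Type*} [MeasurableSpace Ω] (P : Measure Ω)
    {E : Type*} [MeasurableSpace E] [TopologicalSpace E] [OpensMeasurableSpace E]
    (μ : ℕ → Ω → ProbabilityMeasure E) (ν : Ω → ProbabilityMeasure E) : Prop :=
  ∀ φ : ℕ → ℕ, StrictMono φ →
    ∃ ψ : ℕ → ℕ, StrictMono ψ ∧
      ∀ᵐ ω ∂P, Tendsto (fun i => μ (φ (ψ i)) ω) atTop (𝓝 (ν ω))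

lemma tendsto_measure_compl_of_tendsto_dirac {ι Y : Type*} {L : Filter ι}
    [TopologicalSpace Y] [MeasurableSpace Y] [OpensMeasurableSpace Y] [HasOuterApproxClosed Y]
    {μs : ι → ProbabilityMeasure Y} {y : Y}
    (h : Tendsto μs L (𝓝 ⟨Measure.dirac y, inferInstance⟩)) {U : Set Y} (hU : IsOpen U)
    (hy : y ∈ U) : Tendsto (fun i => (μs i : Measure Y) Uᶜ) L (𝓝 0) := by
  have hyF : y ∉ frontier U := by simp [hU.frontier_eq, hy]
  have key := ProbabilityMeasure.tendsto_measure_of_null_frontier_of_tendsto' h (E := Uᶜ)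
    (by simp [frontier_compl, Measure.dirac_apply' _ isClosed_frontier.measurableSet, hyF])
  simpa [Measure.dirac_apply' _ hU.isClosed_compl.measurableSet, hy] using key

lemma measure_preimage_fst_le_add_measure_preimage_snd_compl {X Y : Type*} [MeasurableSpace X]
    [MeasurableSpace Y] (μ : Measure (X × Y)) {S : Set X} {V : Set Y} {G : Set (X × Y)}
    (hSV : S ×ˢ V ⊆ G) : μ (Prod.fst ⁻¹' S) ≤ μ G + μ (Prod.snd ⁻¹' Vᶜ) := by
  refine (measure_mono fun p hp => ?_).trans (measure_union_le G _)
  by_cases hpV : p.2 ∈ V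
  · exact Or.inl (hSV ⟨hp, hpV⟩)
  · exact Or.inr hpV

lemma preimage_prodMk_subset_iUnion_interior {X Y : Type*} [TopologicalSpace X]
    [TopologicalSpace Y] {G : Set (X × Y)} (hG : IsOpen G) {y : Y} {V : ℕ → Set Y}
    (hV : (𝓝 y).HasBasis (fun _ => True) V) :
    (·, y) ⁻¹' G ⊆ ⋃ n, interior {a | ∀ b ∈ V n, (a, b) ∈ G} := by
  intro a ha
  obtain ⟨u, hu, v, hv, huv⟩ := mem_nhds_prod_iff.mp (hG.mem_nhds ha)
  obtain ⟨n, -, hn⟩ := hV.mem_iff.mp hv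
  refine Set.mem_iUnion.mpr ⟨n, mem_interior_iff_mem_nhds.mpr (mem_of_superset hu ?_)⟩
  exact fun a' ha' b hb => huv ⟨ha', hn hb⟩

section Marginals

variable {ι X Y : Type*} {L : Filter ι}
  [TopologicalSpace X] [MeasurableSpace X] [OpensMeasurableSpace X] [HasOuterApproxClosed X]
  [TopologicalSpace Y] [MeasurableSpace Y] [OpensMeasurableSpace Y] [HasOuterApproxClosed Y]
  {μs : ι → ProbabilityMeasure (X × Y)} {ν : ProbabilityMeasure X} {y : Y}

lemma le_liminf_measure_of_prod_subset
    (h₁ : Tendsto (fun i => (μs i).map (f := Prod.fst) measurable_fst.aemeasurable) L (𝓝 ν))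
    (h₂ : Tendsto (fun i => (μs i).map (f := Prod.snd) measurable_snd.aemeasurable) L
      (𝓝 ⟨Measure.dirac y, inferInstance⟩))
    {S : Set X} (hS : IsOpen S) {V : Set Y} (hV : IsOpen V) (hy : y ∈ V) {G : Set (X × Y)}
    (hSV : S ×ˢ V ⊆ G) :
    (ν : Measure X) S ≤ L.liminf fun i => (μs i : Measure (X × Y)) G := by
  have hsnd := tendsto_measure_compl_of_tendsto_dirac h₂ hV hy
  simp only [ProbabilityMeasure.toMeasure_map] at hsnd
  calc (ν : Measure X) S
      ≤ L.liminf fun i => ((μs i : Measure (X × Y)).map Prod.fst) S := by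
        simpa only [ProbabilityMeasure.toMeasure_map] using
          ProbabilityMeasure.le_liminf_measure_open_of_tendsto h₁ hS
    _ ≤ L.liminf fun i => (μs i : Measure (X × Y)) G
          + ((μs i : Measure (X × Y)).map Prod.snd) Vᶜ := by
        refine liminf_le_liminf (.of_forall fun i => ?_)
        rw [Measure.map_apply measurable_fst hS.measurableSet,
          Measure.map_apply measurable_snd hV.isClosed_compl.measurableSet]
        exact measure_preimage_fst_le_add_measure_preimage_snd_compl _ hSV
    _ = L.liminf fun i => (μs i : Measure (X × Y)) G :=
        ENNReal.liminf_add_of_right_tendsto_zero hsnd _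

theorem tendsto_prod_dirac_of_tendsto_map_fst_of_tendsto_map_snd
    [FirstCountableTopology Y] [OpensMeasurableSpace (X × Y)] [L.IsCountablyGenerated]
    (h₁ : Tendsto (fun i => (μs i).map (f := Prod.fst) measurable_fst.aemeasurable) L (𝓝 ν))
    (h₂ : Tendsto (fun i => (μs i).map (f := Prod.snd) measurable_snd.aemeasurable) L
      (𝓝 ⟨Measure.dirac y, inferInstance⟩)) :
    Tendsto μs L (𝓝 ⟨(ν : Measure X).prod (Measure.dirac y), inferInstance⟩) := by
  refine tendsto_of_forall_isOpen_le_liminf' fun G hG => ?_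
  obtain ⟨V, hV⟩ := (𝓝 y).exists_antitone_basis
  set S : ℕ → Set X := fun n => interior {a | ∀ b ∈ V n, (a, b) ∈ G}
  have hS_mono : Monotone S := fun m n hmn =>
    interior_mono fun a ha b hb => ha b (hV.antitone hmn hb)
  have hS_le (n : ℕ) : (ν : Measure X) (S n) ≤ L.liminf fun i => (μs i : Measure (X × Y)) G := by
    refine le_liminf_measure_of_prod_subset h₁ h₂ isOpen_interior isOpen_interior
      (mem_interior_iff_mem_nhds.mpr (hV.mem n)) fun p ⟨hp, hpV⟩ => ?_
    exact interior_subset hp p.2 (interior_subset hpV)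
  calc ((ν : Measure X).prod (Measure.dirac y)) G
      = (ν : Measure X) ((·, y) ⁻¹' G) := by
        rw [Measure.prod_dirac, Measure.map_apply measurable_prodMk_right hG.measurableSet]
    _ ≤ (ν : Measure X) (⋃ n, S n) :=
        measure_mono (preimage_prodMk_subset_iUnion_interior hG hV.toHasBasis)
    _ = ⨆ n, (ν : Measure X) (S n) := hS_mono.measure_iUnion
    _ ≤ _ := iSup_le hS_le

end Marginals

theorem tendstoWeaklyInProbability_prod_dirac_general
    {Ω : Type*} [MeasurableSpace Ω] (P : Measure Ω) (d d' : ℕ)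
    (μ : ℕ → Ω → ProbabilityMeasure (EuclideanSpace ℝ (Fin d) × EuclideanSpace ℝ (Fin d')))
    (ν₁ : Ω → ProbabilityMeasure (EuclideanSpace ℝ (Fin d)))
    (x : EuclideanSpace ℝ (Fin d'))
    (h₁ : TendstoWeaklyInProbability P
      (fun n ω => (μ n ω).map (f := Prod.fst) measurable_fst.aemeasurable) ν₁)
    (h₂ : TendstoWeaklyInProbability P
      (fun n ω => (μ n ω).map (f := Prod.snd) measurable_snd.aemeasurable)
      (fun _ => ⟨Measure.dirac x, inferInstance⟩)) :
    TendstoWeaklyInProbability P μ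
      (fun ω => ⟨(ν₁ ω : Measure (EuclideanSpace ℝ (Fin d))).prod (Measure.dirac x),
        inferInstance⟩) := by
  intro φ hφ
  obtain ⟨ψ₁, hψ₁, hae₁⟩ := h₁ φ hφ
  obtain ⟨ψ₂, hψ₂, hae₂⟩ := h₂ (φ ∘ ψ₁) (hφ.comp hψ₁)
  refine ⟨ψ₁ ∘ ψ₂, hψ₁.comp hψ₂, ?_⟩
  filter_upwards [hae₁, hae₂] with ω hω₁ hω₂
  exact tendsto_prod_dirac_of_tendsto_map_fst_of_tendsto_map_snd
    (hω₁.comp hψ₂.tendsto_atTop) hω₂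

/-- Generalized Slutsky theorem: if the first marginals of random probability measures `μ_n` on
`ℝ^d × ℝ^{d'}` converge weakly in probability to a random probability measure `ν₁` on `ℝ^d`, and
the second marginals converge weakly in probability to a deterministic Dirac mass `δ_x`, then
`μ_n` converges weakly in probability to `ν₁ ⊗ δ_x`. -/
theorem tendstoWeaklyInProbability_prod_dirac
    {Ω : Type*} [MeasurableSpace Ω] (P : Measure Ω) [IsProbabilityMeasure P] (d d' : ℕ)
    (μ : ℕ → Ω → ProbabilityMeasure (EuclideanSpace ℝ (Fin d) × EuclideanSpace ℝ (Fin d')))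
    (ν₁ : Ω → ProbabilityMeasure (EuclideanSpace ℝ (Fin d)))
    (x : EuclideanSpace ℝ (Fin d'))
    (h₁ : TendstoWeaklyInProbability P
      (fun n ω => (μ n ω).map (f := Prod.fst) measurable_fst.aemeasurable) ν₁)
    (h₂ : TendstoWeaklyInProbability P
      (fun n ω => (μ n ω).map (f := Prod.snd) measurable_snd.aemeasurable)
      (fun _ => ⟨Measure.dirac x, inferInstance⟩)) :
    TendstoWeaklyInProbability P μ
      (fun ω => ⟨(ν₁ ω : Measure (EuclideanSpace ℝ (Fin d))).prod (Measure.dirac x),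
        inferInstance⟩) :=
  tendstoWeaklyInProbability_prod_dirac_general P d d' μ ν₁ x h₁ h₂
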